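/- arXiv:1804.02396 — 2 statements merged into one kernel-verified Lean document; each statement's English description precedes it below -/
import Mathlib

section
/- Let J : ℝ⁴ → ℝ⁴ be the map J(x₁,x₂,y₁,y₂) = (y₁,y₂,x₁,x₂). Let V ⊆ ℝ² be open, g : V → ℝ⁴ smooth, I ⊆ ℝ an open interval, and define f : V × I → ℝ⁴ by f(x,y,z) = (cosh z) • J(g(x,y)) - (sinh z) • g(x,y). Then for all (x,y,z) ∈ V × I, det[f_x, f_y, f_z, f] = det[g_x, g_y, g, J g], where subscripts denote partial derivatives and determinants are of 4×4 matrices with the given columns. -/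
noncomputable section

/-- The canonical para-complex structure on `ℝ⁴`. -/
def Jpc : (Fin 4 → ℝ) → (Fin 4 → ℝ) := fun v => ![v 2, v 3, v 0, v 1]

/-- Determinant of the `4 × 4` matrix whose columns are `w₁, w₂, w₃, w₄`. -/
def det4 (w₁ w₂ w₃ w₄ : Fin 4 → ℝ) : ℝ :=
  (Matrix.of fun i j => ![w₁, w₂, w₃, w₄] j i).det

def Jlin : (Fin 4 → ℝ) →L[ℝ] (Fin 4 → ℝ) :=
  LinearMap.toContinuousLinearMap
  { toFun := Jpc
    map_add' := by intro u v; funext i; fin_cases i <;> simp [Jpc]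
    map_smul' := by intro c v; funext i; fin_cases i <;> simp [Jpc] }

set_option maxHeartbeats 1000000 in
theorem det_fin_four' (A : Matrix (Fin 4) (Fin 4) ℝ) :
    A.det =
      A 0 0 * (A 1 1 * (A 2 2 * A 3 3 - A 2 3 * A 3 2)
             - A 1 2 * (A 2 1 * A 3 3 - A 2 3 * A 3 1)
             + A 1 3 * (A 2 1 * A 3 2 - A 2 2 * A 3 1))
    - A 0 1 * (A 1 0 * (A 2 2 * A 3 3 - A 2 3 * A 3 2)
             - A 1 2 * (A 2 0 * A 3 3 - A 2 3 * A 3 0)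
             + A 1 3 * (A 2 0 * A 3 2 - A 2 2 * A 3 0))
    + A 0 2 * (A 1 0 * (A 2 1 * A 3 3 - A 2 3 * A 3 1)
             - A 1 1 * (A 2 0 * A 3 3 - A 2 3 * A 3 0)
             + A 1 3 * (A 2 0 * A 3 1 - A 2 1 * A 3 0))
    - A 0 3 * (A 1 0 * (A 2 1 * A 3 2 - A 2 2 * A 3 1)
             - A 1 1 * (A 2 0 * A 3 2 - A 2 2 * A 3 0)
             + A 1 2 * (A 2 0 * A 3 1 - A 2 1 * A 3 0)) := by
  simp [Matrix.det_succ_row_zero, Fin.sum_univ_succ]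
  norm_num [show (Fin.succ 2 : Fin 4) = 3 from by decide,
    show (Fin.succAbove 2 2 : Fin 4) = 3 from by decide,
    show (Fin.succAbove 1 2 : Fin 4) = 3 from by decide,
    show (Fin.castSucc 2 : Fin 4) = 2 from by decide,
    show (Fin.succAbove 3 2 : Fin 4) = 2 from by decide]
  ring

lemma det4_eq (w₁ w₂ w₃ w₄ : Fin 4 → ℝ) :
    det4 w₁ w₂ w₃ w₄ =
      w₁ 0 * (w₂ 1 * (w₃ 2 * w₄ 3 - w₄ 2 * w₃ 3)
             - w₃ 1 * (w₂ 2 * w₄ 3 - w₄ 2 * w₂ 3)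
             + w₄ 1 * (w₂ 2 * w₃ 3 - w₃ 2 * w₂ 3))
    - w₂ 0 * (w₁ 1 * (w₃ 2 * w₄ 3 - w₄ 2 * w₃ 3)
             - w₃ 1 * (w₁ 2 * w₄ 3 - w₄ 2 * w₁ 3)
             + w₄ 1 * (w₁ 2 * w₃ 3 - w₃ 2 * w₁ 3))
    + w₃ 0 * (w₁ 1 * (w₂ 2 * w₄ 3 - w₄ 2 * w₂ 3)
             - w₂ 1 * (w₁ 2 * w₄ 3 - w₄ 2 * w₁ 3)
             + w₄ 1 * (w₁ 2 * w₂ 3 - w₂ 2 * w₁ 3))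
    - w₄ 0 * (w₁ 1 * (w₂ 2 * w₃ 3 - w₃ 2 * w₂ 3)
             - w₂ 1 * (w₁ 2 * w₃ 3 - w₃ 2 * w₁ 3)
             + w₃ 1 * (w₁ 2 * w₂ 3 - w₂ 2 * w₁ 3)) := by
  rw [det4, det_fin_four']
  simp [Matrix.of_apply]

set_option maxHeartbeats 1000000 in
lemma key (a b c : Fin 4 → ℝ) (ch s : ℝ) :
    det4 (ch • Jpc a - s • a) (ch • Jpc b - s • b) (s • Jpc c - ch • c)
      (ch • Jpc c - s • c) = (ch ^ 2 - s ^ 2) ^ 2 * det4 a b c (Jpc c) := by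
  simp only [det4_eq, Jpc, Pi.sub_apply, Pi.smul_apply, smul_eq_mul,
    Matrix.cons_val_zero, Matrix.cons_val_one, Matrix.head_cons,
    Matrix.cons_val_two, Matrix.tail_cons, Matrix.cons_val_three]
  ring

/-- If `g : V → ℝ⁴` is smooth on an open set `V ⊆ ℝ²`, `I` is an open interval,
and `f (x, y, z) = cosh z • J (g (x, y)) - sinh z • g (x, y)`, then for
`(x, y) ∈ V` and `z ∈ I` one has
`det [f_x, f_y, f_z, f] = det [g_x, g_y, g, J g]`. -/
theorem stmt_6 (V : Set (ℝ × ℝ)) (hV : IsOpen V)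
    (g : ℝ × ℝ → Fin 4 → ℝ) (hg : ContDiffOn ℝ (⊤ : ℕ∞) g V)
    (I : Set ℝ) (hIopen : IsOpen I) (hIinterval : I.OrdConnected)
    (f : ℝ → ℝ → ℝ → Fin 4 → ℝ)
    (hf : ∀ x y z : ℝ,
      f x y z = Real.cosh z • Jpc (g (x, y)) - Real.sinh z • g (x, y)) :
    ∀ x y z : ℝ, (x, y) ∈ V → z ∈ I →
      det4 (deriv (fun t => f t y z) x) (deriv (fun t => f x t z) y)
           (deriv (fun t => f x y t) z) (f x y z) =
      det4 (deriv (fun t => g (t, y)) x) (deriv (fun t => g (x, t)) y)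
           (g (x, y)) (Jpc (g (x, y))) := by
  intro x y z hxy hz
  have hgd : DifferentiableAt ℝ g (x, y) :=
    (hg.contDiffAt (hV.mem_nhds hxy)).differentiableAt (by simp)
  set a := fderiv ℝ g (x, y) (1, 0) with ha_def
  set b := fderiv ℝ g (x, y) (0, 1) with hb_def
  set c := g (x, y) with hc_def
  have ha : HasDerivAt (fun t => g (t, y)) a x :=
    hgd.hasFDerivAt.comp_hasDerivAt x (HasDerivAt.prodMk (hasDerivAt_id x) (hasDerivAt_const x y))
  have hb : HasDerivAt (fun t => g (x, t)) b y :=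
    hgd.hasFDerivAt.comp_hasDerivAt y (HasDerivAt.prodMk (hasDerivAt_const y x) (hasDerivAt_id y))
  have hJa : HasDerivAt (fun t => Jpc (g (t, y))) (Jpc a) x :=
    Jlin.hasFDerivAt.comp_hasDerivAt x ha
  have hJb : HasDerivAt (fun t => Jpc (g (x, t))) (Jpc b) y :=
    Jlin.hasFDerivAt.comp_hasDerivAt y hb
  have hfx : deriv (fun t => f t y z) x = Real.cosh z • Jpc a - Real.sinh z • a := by
    have : HasDerivAt (fun t => f t y z)
        (Real.cosh z • Jpc a - Real.sinh z • a) x := by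
      simp only [hf]
      exact (hJa.const_smul (Real.cosh z)).sub (ha.const_smul (Real.sinh z))
    exact this.deriv
  have hfy : deriv (fun t => f x t z) y = Real.cosh z • Jpc b - Real.sinh z • b := by
    have : HasDerivAt (fun t => f x t z)
        (Real.cosh z • Jpc b - Real.sinh z • b) y := by
      simp only [hf]
      exact (hJb.const_smul (Real.cosh z)).sub (hb.const_smul (Real.sinh z))
    exact this.deriv
  have hfz : deriv (fun t => f x y t) z = Real.sinh z • Jpc c - Real.cosh z • c := by
    have : HasDerivAt (fun t => f x y t)
        (Real.sinh z • Jpc c - Real.cosh z • c) z := by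
      simp only [hf]
      exact ((Real.hasDerivAt_cosh z).smul_const (Jpc c)).sub
        ((Real.hasDerivAt_sinh z).smul_const c)
    exact this.deriv
  rw [hfx, hfy, hfz, hf, ha.deriv, hb.deriv, ← hc_def, key,
    Real.cosh_sq_sub_sinh_sq, one_pow, one_mul]
end
end

section
/- Let J : ℝ⁴ → ℝ⁴ be the map J(x₁,x₂,y₁,y₂) = (y₁,y₂,x₁,x₂), let γ₁, γ₂ : ℝ → ℝ⁴ be differentiable curves with J∘γ₁ = γ₁, and set g(x,y) = x•γ₁(y) + γ₂(y) and f(x,y,z) = cosh z • J(g(x,y)) − sinh z • g(x,y). Then for all (x,y,z), det[f_x, f_y, f_z, f] = det[γ₁(y), γ₂'(y), γ₂(y), J(γ₂(y))]. In particular, if det[γ₁, γ₂', γ₂, Jγ₂] never vanishes then f is a centro-affine immersion (its position vector is transversal to the span of its partial derivatives). -/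
/-!
Write `a = γ₁ y`, `b = γ₂ y`, `G = x • a + b`, `c = cosh z`, `s = sinh z`. Then
`f_x = (c - s) • a`, `f_z = s • J G - c • G` and `f = c • J G - s • G`, so the last two
columns span the same plane as `J G, G` with determinant factor `c² - s² = 1`, and subtracting
multiples of `a` from them leaves `J b, b`. In the remaining column `f_y` the term `x • γ₁'`
drops out because `det [a, a', b, J b] = 0` whenever `J a = a` and `J a' = a'` (the latter by
differentiating `J ∘ γ₁ = γ₁`), and the other two terms are turned into `det [a, γ₂', b, J b]` by the identity
`det [J v₁, v₂, v₃, J v₃] = -det [v₁, J v₂, v₃, J v₃]`.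
-/

noncomputable section

theorem det4_apply (u v p q : Fin 4 → ℝ) : det4 u v p q =
    u 0 * (v 1 * (p 2 * q 3 - q 2 * p 3) - p 1 * (v 2 * q 3 - q 2 * v 3)
      + q 1 * (v 2 * p 3 - p 2 * v 3))
    - v 0 * (u 1 * (p 2 * q 3 - q 2 * p 3) - p 1 * (u 2 * q 3 - q 2 * u 3)
      + q 1 * (u 2 * p 3 - p 2 * u 3))
    + p 0 * (u 1 * (v 2 * q 3 - q 2 * v 3) - v 1 * (u 2 * q 3 - q 2 * u 3)
      + q 1 * (u 2 * v 3 - v 2 * u 3))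
    - q 0 * (u 1 * (v 2 * p 3 - p 2 * v 3) - v 1 * (u 2 * p 3 - p 2 * u 3)
      + p 1 * (u 2 * v 3 - v 2 * u 3)) := by
  rw [det4, ← Matrix.det_transpose, Matrix.det_succ_row_zero]
  simp only [Matrix.cons_val', Matrix.cons_val_fin_one, Fin.isValue, Matrix.transpose_apply,
    Matrix.of_apply, Matrix.cons_val_zero, Matrix.det_fin_three, Matrix.submatrix_apply,
    Fin.succ_zero_eq_one, Fin.succAbove, Fin.castSucc_zero, Matrix.cons_val_one,
    Fin.succ_one_eq_two, Fin.castSucc_one, Matrix.cons_val, Fin.reduceSucc, Fin.reduceCastSucc,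
    Fin.sum_univ_succ, Fin.coe_ofNat_eq_mod, Nat.zero_mod, pow_zero, one_mul, lt_self_iff_false,
    ↓reduceIte, not_lt_zero, Fin.val_succ, Fin.succ_pos, zero_add, pow_one, neg_mul,
    Fin.lt_one_iff, Fin.reduceEq, Fin.reduceLT,
    Finset.univ_unique, Fin.default_eq_zero, Fin.val_eq_zero, Finset.sum_singleton]
  ring

theorem HasDerivAt.Jpc {u : ℝ → Fin 4 → ℝ} {u' : Fin 4 → ℝ} {t : ℝ}
    (h : HasDerivAt u u' t) : HasDerivAt (fun s => Jpc (u s)) (Jpc u') t := by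
  rw [hasDerivAt_pi] at h ⊢
  intro i
  fin_cases i <;> exact h _

theorem Jpc_deriv_eq {γ : ℝ → Fin 4 → ℝ} (hγ : ∀ y, Jpc (γ y) = γ y) {y : ℝ}
    (hd : DifferentiableAt ℝ γ y) : Jpc (deriv γ y) = deriv γ y := by
  have h := hd.hasDerivAt.Jpc
  simp only [hγ] at h
  exact h.unique hd.hasDerivAt

@[simp] theorem Jpc_add (v w : Fin 4 → ℝ) : Jpc (v + w) = Jpc v + Jpc w := by
  ext i; fin_cases i <;> rfl

@[simp] theorem Jpc_smul (c : ℝ) (v : Fin 4 → ℝ) : Jpc (c • v) = c • Jpc v := by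
  ext i; fin_cases i <;> rfl

theorem det4_swap_right (u v p q : Fin 4 → ℝ) : det4 u v q p = -det4 u v p q := by
  rw [det4_apply, det4_apply]; ring

theorem det4_Jpc_left_right (v₁ v₂ v₃ : Fin 4 → ℝ) :
    det4 (Jpc v₁) v₂ v₃ (Jpc v₃) = -det4 v₁ (Jpc v₂) v₃ (Jpc v₃) := by
  simp only [det4_apply, Jpc, Matrix.cons_val]; ring

theorem det4_smul_sub_smul_right (u v p q : Fin 4 → ℝ) (α β γ δ : ℝ) :
    det4 u v (α • p - β • q) (γ • p - δ • q) = (β * γ - α * δ) * det4 u v p q := by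
  simp only [det4_apply, Pi.sub_apply, Pi.smul_apply, smul_eq_mul]; ring

theorem det4_smul_left_add_smul_right (u v p q : Fin 4 → ℝ) (k t : ℝ) :
    det4 (k • u) v (t • u + p) (t • u + q) = k * det4 u v p q := by
  simp only [det4_apply, Pi.add_apply, Pi.smul_apply, smul_eq_mul]; ring

theorem det4_smul_sub_smul_second (u v w p q : Fin 4 → ℝ) (c s : ℝ) :
    det4 u (c • v - s • w) p q = c * det4 u v p q - s * det4 u w p q := by
  simp only [det4_apply, Pi.sub_apply, Pi.smul_apply, smul_eq_mul]; ring

theorem det4_smul_add_second (u v w p q : Fin 4 → ℝ) (x : ℝ) :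
    det4 u (x • v + w) p q = x * det4 u v p q + det4 u w p q := by
  simp only [det4_apply, Pi.add_apply, Pi.smul_apply, smul_eq_mul]; ring

theorem det4_eq_zero_of_Jpc_eq {a a' : Fin 4 → ℝ} (ha : Jpc a = a) (ha' : Jpc a' = a')
    (b : Fin 4 → ℝ) : det4 a a' b (Jpc b) = 0 := by
  have h := det4_Jpc_left_right a a' b
  rw [ha, ha'] at h
  linarith

theorem det4_partials_eq {a a' : Fin 4 → ℝ} (ha : Jpc a = a) (ha' : Jpc a' = a')
    (b b' : Fin 4 → ℝ) (x c s : ℝ) :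
    det4 (c • Jpc a - s • a) (c • Jpc (x • a' + b') - s • (x • a' + b'))
        (s • Jpc (x • a + b) - c • (x • a + b)) (c • Jpc (x • a + b) - s • (x • a + b)) =
      (c ^ 2 - s ^ 2) ^ 2 * det4 a b' b (Jpc b) := by
  have hJb' : det4 a (Jpc b') b (Jpc b) = -det4 a b' b (Jpc b) := by
    have h := det4_Jpc_left_right a b' b
    rw [ha] at h
    linarith
  rw [det4_smul_sub_smul_right, ha, ← sub_smul]
  simp only [Jpc_add, Jpc_smul, ha, ha']
  rw [det4_smul_left_add_smul_right, det4_smul_sub_smul_second, det4_smul_add_second,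
    det4_smul_add_second, det4_swap_right a a', det4_swap_right a (Jpc b'),
    det4_swap_right a b', det4_eq_zero_of_Jpc_eq ha ha', hJb']
  ring

theorem hasDerivAt_cosh_smul_Jpc_sub_sinh_smul {u : ℝ → Fin 4 → ℝ} {u' : Fin 4 → ℝ} {t : ℝ}
    (z : ℝ) (h : HasDerivAt u u' t) :
    HasDerivAt (fun t => Real.cosh z • Jpc (u t) - Real.sinh z • u t)
      (Real.cosh z • Jpc u' - Real.sinh z • u') t :=
  (h.Jpc.fun_const_smul _).fun_sub (h.fun_const_smul _)

theorem hasDerivAt_cosh_smul_sub_sinh_smul (p q : Fin 4 → ℝ) (z : ℝ) :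
    HasDerivAt (fun t => Real.cosh t • p - Real.sinh t • q)
      (Real.sinh z • p - Real.cosh z • q) z :=
  ((Real.hasDerivAt_cosh z).smul_const p).sub ((Real.hasDerivAt_sinh z).smul_const q)

/-- If `γ₁, γ₂` are differentiable, `J ∘ γ₁ = γ₁`,
`g (x, y) = x • γ₁ y + γ₂ y` and
`f (x, y, z) = cosh z • J (g (x, y)) - sinh z • g (x, y)`, then
`det [f_x, f_y, f_z, f] = det [γ₁, γ₂', γ₂, J γ₂]`; in particular, if the
latter determinant never vanishes then `f` is a centro-affine immersion. -/
theorem stmt_16 (γ₁ γ₂ : ℝ → Fin 4 → ℝ)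
    (hd₁ : Differentiable ℝ γ₁) (hd₂ : Differentiable ℝ γ₂)
    (h₁ : ∀ y, Jpc (γ₁ y) = γ₁ y)
    (g : ℝ → ℝ → Fin 4 → ℝ) (hg : ∀ x y, g x y = x • γ₁ y + γ₂ y)
    (f : ℝ → ℝ → ℝ → Fin 4 → ℝ)
    (hf : ∀ x y z,
      f x y z = Real.cosh z • Jpc (g x y) - Real.sinh z • g x y) :
    (∀ x y z : ℝ,
      det4 (deriv (fun t => f t y z) x) (deriv (fun t => f x t z) y)
          (deriv (fun t => f x y t) z) (f x y z) =
        det4 (γ₁ y) (deriv γ₂ y) (γ₂ y) (Jpc (γ₂ y))) ∧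
    ((∀ y : ℝ, det4 (γ₁ y) (deriv γ₂ y) (γ₂ y) (Jpc (γ₂ y)) ≠ 0) →
      ∀ x y z : ℝ,
        det4 (deriv (fun t => f t y z) x) (deriv (fun t => f x t z) y)
            (deriv (fun t => f x y t) z) (f x y z) ≠ 0) := by
  have key : ∀ x y z : ℝ,
      det4 (deriv (fun t => f t y z) x) (deriv (fun t => f x t z) y)
          (deriv (fun t => f x y t) z) (f x y z) =
        det4 (γ₁ y) (deriv γ₂ y) (γ₂ y) (Jpc (γ₂ y)) := by
    intro x y z
    simp only [hf, hg]
    have f_x := hasDerivAt_cosh_smul_Jpc_sub_sinh_smul z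
      (((hasDerivAt_id' x).smul_const (γ₁ y)).add_const (γ₂ y))
    have f_y := hasDerivAt_cosh_smul_Jpc_sub_sinh_smul z
      (((hd₁ y).hasDerivAt.fun_const_smul x).fun_add (hd₂ y).hasDerivAt)
    rw [f_x.deriv, one_smul, f_y.deriv, (hasDerivAt_cosh_smul_sub_sinh_smul _ _ z).deriv,
      det4_partials_eq (h₁ y) (Jpc_deriv_eq h₁ (hd₁ y)), Real.cosh_sq_sub_sinh_sq, one_pow, one_mul]
  exact ⟨key, fun h x y z => key x y z ▸ h y⟩
end
end
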